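/- arXiv:0706.0332 — 4 statements merged into one kernel-verified Lean document; each statement's English description precedes it below -/
import Mathlib

section
/- Let R be an algebraic curvature tensor on ℝⁿ (n ≥ 2) and let k > 0. Assume R is pointwise 1/4-pinched: for all X, Y ∈ ℝⁿ, (k/4)·(|X|²|Y|² − ⟨X,Y⟩²) ≤ R(X,Y,X,Y) ≤ k·(|X|²|Y|² − ⟨X,Y⟩²). Then R has nonnegative complex sectional curvature, i.e. R(Z, W, Z̄, W̄) ≥ 0 for all Z, W ∈ ℂⁿ. -/
open Complex

noncomputable section

/-- An algebraic curvature tensor on `ℝⁿ`, given by its coefficients on the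
standard basis, satisfying the usual symmetries and the first Bianchi identity.
(A multilinear map `(ℝⁿ)⁴ → ℝ` with these symmetries is equivalent to such data.) -/
structure AlgCurv (n : ℕ) where
  R : Fin n → Fin n → Fin n → Fin n → ℝ
  skew₁ : ∀ i j k l, R i j k l = - R j i k l
  skew₂ : ∀ i j k l, R i j k l = - R i j l k
  pair_symm : ∀ i j k l, R i j k l = R k l i j
  bianchi : ∀ i j k l, R i j k l + R j k i l + R k i j l = 0

namespace AlgCurv

variable {n : ℕ}

/-- The multilinear map `(ℝⁿ)⁴ → ℝ` determined by the coefficients. -/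
def evalR (T : AlgCurv n) (X Y U V : Fin n → ℝ) : ℝ :=
  ∑ i : Fin n, ∑ j : Fin n, ∑ k : Fin n, ∑ l : Fin n,
    T.R i j k l * X i * Y j * U k * V l

/-- The `ℂ`-multilinear extension to `ℂⁿ = Fin n → ℂ`. -/
def evalC (T : AlgCurv n) (Z W U V : Fin n → ℂ) : ℂ :=
  ∑ i : Fin n, ∑ j : Fin n, ∑ k : Fin n, ∑ l : Fin n,
    (T.R i j k l : ℂ) * Z i * W j * U k * V l

end AlgCurv

/-- The standard (real) inner product on `ℝⁿ`. -/
def rInner {n : ℕ} (X Y : Fin n → ℝ) : ℝ := ∑ i : Fin n, X i * Y i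

/-- The `ℂ`-bilinear (not hermitian) extension `⟨Z,W⟩ = Σᵢ Zᵢ Wᵢ`. -/
def cInner {n : ℕ} (Z W : Fin n → ℂ) : ℂ := ∑ i : Fin n, Z i * W i

/-- Entrywise complex conjugation. -/
def conjV {n : ℕ} (Z : Fin n → ℂ) : Fin n → ℂ := fun i => starRingEnd ℂ (Z i)

/-- `R` has nonnegative complex sectional curvature: `R(Z,W,Z̄,W̄)` is a
nonnegative real number for all `Z, W ∈ ℂⁿ`. -/
def nonnegCSC {n : ℕ} (T : AlgCurv n) : Prop :=
  ∀ Z W : Fin n → ℂ, ∃ r : ℝ, 0 ≤ r ∧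
    T.evalC Z W (conjV Z) (conjV W) = (r : ℂ)

/-- The complexified vector `X + iY`. -/
def cx {n : ℕ} (X Y : Fin n → ℝ) : Fin n → ℂ :=
  fun i => (X i : ℂ) + Complex.I * (Y i : ℂ)

/-- The `ℂ`-multilinear extension of the curvature tensor of constant curvature one,
`I(X,Y,Z,W) = ⟨X,Z⟩⟨Y,W⟩ − ⟨X,W⟩⟨Y,Z⟩`. -/
def IC {n : ℕ} (Z W U V : Fin n → ℂ) : ℂ :=
  cInner Z U * cInner W V - cInner Z V * cInner W U

/-- The `p`-th standard basis vector of `ℂⁿ`. -/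
def basisC {n : ℕ} (p : Fin n) : Fin n → ℂ := fun i => if i = p then 1 else 0

/-- Hamilton's reaction term `Q(R)`, evaluated on `(Z, W, U, V)`
(with `U = Z̄`, `V = W̄` in applications). -/
def Qr {n : ℕ} (T : AlgCurv n) (Z W U V : Fin n → ℂ) : ℂ :=
  (∑ p : Fin n, ∑ q : Fin n,
      T.evalC Z W (basisC p) (basisC q) * T.evalC U V (basisC p) (basisC q))
  + 2 * (∑ p : Fin n, ∑ q : Fin n,
      T.evalC Z (basisC p) U (basisC q) * T.evalC W (basisC p) V (basisC q))
  - 2 * (∑ p : Fin n, ∑ q : Fin n,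
      T.evalC Z (basisC p) V (basisC q) * T.evalC W (basisC p) U (basisC q))

/-- The `ℂ`-linear extension of a real matrix (endomorphism of `ℝⁿ`) acting on `ℂⁿ`. -/
def mulVecC {n : ℕ} (A : Matrix (Fin n) (Fin n) ℝ) (Z : Fin n → ℂ) : Fin n → ℂ :=
  fun i => ∑ j : Fin n, (A i j : ℂ) * Z j

/-- `(A ∧ id)(Z, W, Z̄, W̄)`. -/
def wedgeId {n : ℕ} (A : Matrix (Fin n) (Fin n) ℝ) (Z W : Fin n → ℂ) : ℂ :=
  (1/2 : ℂ) * (cInner (mulVecC A Z) (conjV Z) * cInner W (conjV W)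
             + cInner (mulVecC A W) (conjV W) * cInner Z (conjV Z))
  - (1/2 : ℂ) * (cInner (mulVecC A W) (conjV Z) * cInner Z (conjV W)
               + cInner (mulVecC A Z) (conjV W) * cInner W (conjV Z))

/-- The Ricci curvature of `R`, as a matrix:  `⟨Ric(R)(X), Y⟩ = Σ_p R(X, e_p, Y, e_p)`. -/
def ricM {n : ℕ} (T : AlgCurv n) : Matrix (Fin n) (Fin n) ℝ :=
  Matrix.of fun i j => ∑ p : Fin n, T.R i p j p

/-!
Writing `Z = x + iy` and `W = u + iv`, the complex sectional curvature `R(Z,W,Z̄,W̄)` is real, and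
replacing `(Z, W)` by `(aZ + bW, cZ + dW)` multiplies it by `|ad - bc|²`. A Gram–Schmidt step, a
rotation and a phase change bring any pair to one with `x, y, u, v` pairwise orthogonal, where
`R(Z,W,Z̄,W̄) = R(x,u,x,u) + R(x,v,x,v) + R(y,u,y,u) + R(y,v,y,v) - 2 R(x,y,u,v)`.
Pinching bounds the four sectional terms below by `k/4 |x|²|u|², …`, and Berger's polarization
argument bounds `2 R(x,y,u,v)` above by `k |x||y||u||v|`; the difference is
`k/4 ((|x||u| - |y||v|)² + (|x||v| - |y||u|)²) ≥ 0`.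
-/

section Quadrilinear

variable {n : ℕ} {M : Type*} [CommRing M]

def quadrilinear (c : Fin n → Fin n → Fin n → Fin n → M) (X Y U V : Fin n → M) : M :=
  ∑ i : Fin n, ∑ j : Fin n, ∑ k : Fin n, ∑ l : Fin n, c i j k l * X i * Y j * U k * V l

theorem sum4_congr {ι β : Type*} [Fintype ι] [AddCommMonoid β] {f g : ι → ι → ι → ι → β}
    (h : ∀ i j k l, f i j k l = g i j k l) :
    ∑ i, ∑ j, ∑ k, ∑ l, f i j k l = ∑ i, ∑ j, ∑ k, ∑ l, g i j k l := by
  simp only [h]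

theorem sum4_comm_pairs {ι β : Type*} [Fintype ι] [AddCommMonoid β] (f : ι → ι → ι → ι → β) :
    ∑ i, ∑ j, ∑ k, ∑ l, f i j k l = ∑ k, ∑ l, ∑ i, ∑ j, f i j k l := by
  rw [Finset.sum_comm_cycle]
  exact Finset.sum_congr rfl fun _ _ => Finset.sum_comm_cycle

variable (c : Fin n → Fin n → Fin n → Fin n → M)

theorem quadrilinear_add₁ (X X' Y U V : Fin n → M) :
    quadrilinear c (X + X') Y U V = quadrilinear c X Y U V + quadrilinear c X' Y U V := by
  simp only [quadrilinear, Pi.add_apply, mul_add, add_mul, Finset.sum_add_distrib]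

theorem quadrilinear_add₂ (X Y Y' U V : Fin n → M) :
    quadrilinear c X (Y + Y') U V = quadrilinear c X Y U V + quadrilinear c X Y' U V := by
  simp only [quadrilinear, Pi.add_apply, mul_add, add_mul, Finset.sum_add_distrib]

theorem quadrilinear_add₃ (X Y U U' V : Fin n → M) :
    quadrilinear c X Y (U + U') V = quadrilinear c X Y U V + quadrilinear c X Y U' V := by
  simp only [quadrilinear, Pi.add_apply, mul_add, add_mul, Finset.sum_add_distrib]

theorem quadrilinear_add₄ (X Y U V V' : Fin n → M) :
    quadrilinear c X Y U (V + V') = quadrilinear c X Y U V + quadrilinear c X Y U V' := by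
  simp only [quadrilinear, Pi.add_apply, mul_add, Finset.sum_add_distrib]

theorem quadrilinear_smul₁ (a : M) (X Y U V : Fin n → M) :
    quadrilinear c (a • X) Y U V = a * quadrilinear c X Y U V := by
  simp only [quadrilinear, Pi.smul_apply, smul_eq_mul, Finset.mul_sum, mul_assoc, mul_left_comm]

theorem quadrilinear_smul₂ (a : M) (X Y U V : Fin n → M) :
    quadrilinear c X (a • Y) U V = a * quadrilinear c X Y U V := by
  simp only [quadrilinear, Pi.smul_apply, smul_eq_mul, Finset.mul_sum, mul_assoc, mul_left_comm]

theorem quadrilinear_smul₃ (a : M) (X Y U V : Fin n → M) :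
    quadrilinear c X Y (a • U) V = a * quadrilinear c X Y U V := by
  simp only [quadrilinear, Pi.smul_apply, smul_eq_mul, Finset.mul_sum, mul_assoc, mul_left_comm]

theorem quadrilinear_smul₄ (a : M) (X Y U V : Fin n → M) :
    quadrilinear c X Y U (a • V) = a * quadrilinear c X Y U V := by
  simp only [quadrilinear, Pi.smul_apply, smul_eq_mul, Finset.mul_sum, mul_assoc, mul_left_comm]

theorem RingHom.map_quadrilinear {M' : Type*} [CommRing M'] (f : M →+* M')
    (X Y U V : Fin n → M) :
    f (quadrilinear c X Y U V)
      = quadrilinear (fun i j k l => f (c i j k l)) (f ∘ X) (f ∘ Y) (f ∘ U) (f ∘ V) := by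
  simp only [quadrilinear, map_sum, map_mul, Function.comp_apply]

variable {c}

theorem quadrilinear_swap₁₂ (hc : ∀ i j k l, c i j k l = - c j i k l) (X Y U V : Fin n → M) :
    quadrilinear c Y X U V = - quadrilinear c X Y U V := by
  rw [quadrilinear, quadrilinear, Finset.sum_comm]
  simp only [← Finset.sum_neg_distrib]
  exact sum4_congr fun j i k l => by rw [hc]; ring

theorem quadrilinear_swap₃₄ (hc : ∀ i j k l, c i j k l = - c i j l k) (X Y U V : Fin n → M) :
    quadrilinear c X Y V U = - quadrilinear c X Y U V := by
  rw [quadrilinear, quadrilinear]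
  simp only [← Finset.sum_neg_distrib]
  refine Finset.sum_congr rfl fun i _ => Finset.sum_congr rfl fun j _ => ?_
  rw [Finset.sum_comm]
  refine Finset.sum_congr rfl fun l _ => Finset.sum_congr rfl fun k _ => ?_
  rw [hc]; ring

theorem quadrilinear_pair_comm (hc : ∀ i j k l, c i j k l = c k l i j) (X Y U V : Fin n → M) :
    quadrilinear c U V X Y = quadrilinear c X Y U V := by
  rw [quadrilinear, quadrilinear, sum4_comm_pairs]
  exact sum4_congr fun k l i j => by rw [hc]; ring

theorem quadrilinear_bianchi (hc : ∀ i j k l, c i j k l + c j k i l + c k i j l = 0)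
    (X Y U V : Fin n → M) :
    quadrilinear c X Y U V + quadrilinear c Y U X V + quadrilinear c U X Y V = 0 := by
  have h₂ : quadrilinear c Y U X V
      = ∑ i, ∑ j, ∑ k, ∑ l, c j k i l * X i * Y j * U k * V l := by
    rw [quadrilinear, Finset.sum_comm_cycle]
    exact sum4_congr fun i j k l => by ring
  have h₃ : quadrilinear c U X Y V
      = ∑ i, ∑ j, ∑ k, ∑ l, c k i j l * X i * Y j * U k * V l := by
    rw [quadrilinear, ← Finset.sum_comm_cycle]
    exact sum4_congr fun i j k l => by ring
  rw [h₂, h₃, quadrilinear]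
  simp only [← Finset.sum_add_distrib]
  refine Finset.sum_eq_zero fun i _ => Finset.sum_eq_zero fun j _ =>
    Finset.sum_eq_zero fun k _ => Finset.sum_eq_zero fun l _ => ?_
  linear_combination X i * Y j * U k * V l * hc i j k l

theorem quadrilinear_smul_add [IsAddTorsionFree M] (hc₁₂ : ∀ i j k l, c i j k l = - c j i k l)
    (hc₃₄ : ∀ i j k l, c i j k l = - c i j l k) (a b a' b' e f e' f' : M) (X Y U V : Fin n → M) :
    quadrilinear c (a • X + b • Y) (a' • X + b' • Y) (e • U + f • V) (e' • U + f' • V)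
      = (a * b' - b * a') * (e * f' - f * e') * quadrilinear c X Y U V := by
  have hXX : ∀ U V, quadrilinear c X X U V = 0 := fun U V =>
    self_eq_neg.mp (quadrilinear_swap₁₂ hc₁₂ X X U V)
  have hYY : ∀ U V, quadrilinear c Y Y U V = 0 := fun U V =>
    self_eq_neg.mp (quadrilinear_swap₁₂ hc₁₂ Y Y U V)
  have hUU : ∀ X Y, quadrilinear c X Y U U = 0 := fun X Y =>
    self_eq_neg.mp (quadrilinear_swap₃₄ hc₃₄ X Y U U)
  have hVV : ∀ X Y, quadrilinear c X Y V V = 0 := fun X Y =>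
    self_eq_neg.mp (quadrilinear_swap₃₄ hc₃₄ X Y V V)
  simp only [quadrilinear_add₁, quadrilinear_add₂, quadrilinear_add₃, quadrilinear_add₄,
    quadrilinear_smul₁, quadrilinear_smul₂, quadrilinear_smul₃, quadrilinear_smul₄,
    hXX, hYY, hUU, hVV, quadrilinear_swap₁₂ hc₁₂ Y X, quadrilinear_swap₃₄ hc₃₄ _ _ V U]
  ring

end Quadrilinear

section Vectors

variable {n : ℕ}

def PairwiseOrthogonal (x y u v : Fin n → ℝ) : Prop :=
  x ⬝ᵥ y = 0 ∧ x ⬝ᵥ u = 0 ∧ x ⬝ᵥ v = 0 ∧ y ⬝ᵥ u = 0 ∧ y ⬝ᵥ v = 0 ∧ u ⬝ᵥ v = 0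

theorem PairwiseOrthogonal.smul {x y u v : Fin n → ℝ} (h : PairwiseOrthogonal x y u v)
    (a b c d : ℝ) : PairwiseOrthogonal (a • x) (b • y) (c • u) (d • v) := by
  obtain ⟨hxy, hxu, hxv, hyu, hyv, huv⟩ := h
  simp only [PairwiseOrthogonal, smul_dotProduct, dotProduct_smul, hxy, hxu, hxv, hyu, hyv, huv,
    smul_zero, and_self]

theorem cx_eq_add (x y : Fin n → ℝ) : cx x y = ofReal ∘ x + I • (ofReal ∘ y) := rfl

theorem star_cx (x y : Fin n → ℝ) : star (cx x y) = ofReal ∘ x + (-I) • (ofReal ∘ y) := by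
  ext i; simp [cx]

theorem re_dotProduct (Z W : Fin n → ℂ) :
    (Z ⬝ᵥ W).re = (re ∘ Z) ⬝ᵥ (re ∘ W) - (im ∘ Z) ⬝ᵥ (im ∘ W) := by
  simp only [dotProduct, re_sum, mul_re, Finset.sum_sub_distrib, Function.comp_apply]

theorem im_dotProduct (Z W : Fin n → ℂ) :
    (Z ⬝ᵥ W).im = (re ∘ Z) ⬝ᵥ (im ∘ W) + (im ∘ Z) ⬝ᵥ (re ∘ W) := by
  simp only [dotProduct, im_sum, mul_im, Finset.sum_add_distrib, Function.comp_apply]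

theorem cx_re_im (Z : Fin n → ℂ) : cx (re ∘ Z) (im ∘ Z) = Z := by
  ext i; simp [cx, mul_comm I]

theorem pairwiseOrthogonal_re_im {Z W : Fin n → ℂ} (hq : Z ⬝ᵥ W = 0) (hh : Z ⬝ᵥ star W = 0)
    (hZ : (Z ⬝ᵥ Z).im = 0) (hW : (W ⬝ᵥ W).im = 0) :
    PairwiseOrthogonal (re ∘ Z) (im ∘ Z) (re ∘ W) (im ∘ W) := by
  have hre_star : re ∘ star W = re ∘ W := by ext i; simp
  have him_star : im ∘ star W = -(im ∘ W) := by ext i; simp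
  have h₁ := congrArg re hq
  have h₂ := congrArg im hq
  have h₃ := congrArg re hh
  have h₄ := congrArg im hh
  rw [re_dotProduct] at h₁ h₃
  rw [im_dotProduct] at h₂ h₄ hZ hW
  rw [hre_star, him_star, dotProduct_neg] at h₃ h₄
  rw [dotProduct_comm (im ∘ Z)] at hZ
  rw [dotProduct_comm (im ∘ W)] at hW
  simp only [zero_re, zero_im] at h₁ h₂ h₃ h₄
  refine ⟨?_, ?_, ?_, ?_, ?_, ?_⟩ <;> linarith

theorem exists_pos_dotProduct_star_self_eq_ofReal {Z : Fin n → ℂ} (hZ : Z ≠ 0) :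
    ∃ p : ℝ, 0 < p ∧ Z ⬝ᵥ star Z = p := by
  open scoped ComplexOrder in
  obtain ⟨hre, him⟩ := pos_iff.mp (Matrix.dotProduct_self_star_pos_iff.mpr hZ)
  exact ⟨_, hre, Complex.ext rfl (by simp [← him])⟩

end Vectors

theorem exists_ne_zero_sq_mul_im_eq_zero (ζ : ℂ) : ∃ μ : ℂ, μ ≠ 0 ∧ (μ ^ 2 * ζ).im = 0 := by
  rcases eq_or_ne ζ 0 with rfl | hζ
  · exact ⟨1, one_ne_zero, by simp⟩
  obtain ⟨μ, hμ⟩ := IsAlgClosed.exists_pow_nat_eq (star ζ) two_pos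
  refine ⟨μ, ?_, ?_⟩
  · rintro rfl
    exact hζ (star_eq_zero.mp (by simpa using hμ.symm))
  · rw [hμ, Complex.star_def, mul_comm, mul_conj, ofReal_im]

/- `t` parametrizes the change of basis `(Z + t W, -t̄ s Z + p W)` with `p = |Z|²`, `s = |W|²`,
which keeps a hermitian orthogonal pair hermitian orthogonal; the equation makes the new pair
also orthogonal for the bilinear form. -/
theorem exists_rotation (α β γ : ℂ) {p s : ℝ} (hp : 0 ≤ p) (hs : 0 < s) :
    ∃ t : ℂ, -star t * α + (p - normSq t * s) * β + t * γ = 0 := by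
  rcases eq_or_ne β 0 with rfl | hβ
  · exact ⟨0, by simp⟩
  -- `u` makes `(u γ - ū α) / β` a real number `r`; then `t = ρ u` with `s ρ² - r ρ - p = 0`.
  set κ := γ * star β + star α * β with hκ
  set u := cexp (↑(-arg κ) * I)
  have hu : normSq u = 1 := by rw [normSq_eq_norm_sq, norm_exp_ofReal_mul_I, one_pow]
  have huκ : u * κ = ‖κ‖ := by
    conv_lhs => rw [← norm_mul_exp_arg_mul_I κ]
    rw [mul_left_comm, ← Complex.exp_add]
    push_cast
    simp
  set r : ℝ := (‖κ‖ - 2 * (u * star α * β).re) / normSq β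
  have hr : u * γ - star u * α = r * β := by
    have hz := add_conj (u * star α * β)
    have hββ := mul_conj β
    simp only [map_mul, ← Complex.star_def, star_star] at hz hββ
    push_cast at hz
    have hβ' : (normSq β : ℂ) ≠ 0 := ofReal_ne_zero.mpr (normSq_pos.mpr hβ).ne'
    have hw : (u * γ - star u * α) * star β = ‖κ‖ - 2 * (u * star α * β).re := by
      rw [← huκ, hκ]
      linear_combination -hz
    simp only [r]
    push_cast
    rw [div_mul_eq_mul_div, eq_div_iff hβ', ← hw]
    linear_combination (-(u * γ - star u * α)) * hββ
  obtain ⟨ρ, hρ⟩ : ∃ ρ : ℝ, s * (ρ * ρ) + -r * ρ + -p = 0 := by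
    refine exists_quadratic_eq_zero hs.ne' ⟨√(discrim _ _ _), (Real.mul_self_sqrt ?_).symm⟩
    rw [discrim]
    nlinarith [sq_nonneg r]
  refine ⟨ρ * u, ?_⟩
  have hstar : star (ρ * u : ℂ) = ρ * star u := by simp
  have hnorm : normSq (ρ * u) = ρ ^ 2 := by rw [normSq_mul, normSq_ofReal, hu]; ring
  rw [hstar, hnorm]
  have hρ' := congrArg ofReal hρ
  push_cast at hρ' ⊢
  linear_combination ρ * hr - β * hρ'

namespace AlgCurv

variable {n : ℕ} (T : AlgCurv n)

theorem evalR_eq_quadrilinear (X Y U V : Fin n → ℝ) :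
    T.evalR X Y U V = quadrilinear T.R X Y U V := rfl

theorem evalC_eq_quadrilinear (Z W U V : Fin n → ℂ) :
    T.evalC Z W U V = quadrilinear (fun i j k l => (T.R i j k l : ℂ)) Z W U V := rfl

theorem evalR_pair_comm (X Y U V : Fin n → ℝ) : T.evalR U V X Y = T.evalR X Y U V :=
  quadrilinear_pair_comm T.pair_symm X Y U V

theorem evalR_swap₁₂ (X Y U V : Fin n → ℝ) : T.evalR Y X U V = - T.evalR X Y U V :=
  quadrilinear_swap₁₂ T.skew₁ X Y U V

theorem evalR_swap₃₄ (X Y U V : Fin n → ℝ) : T.evalR X Y V U = - T.evalR X Y U V :=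
  quadrilinear_swap₃₄ T.skew₂ X Y U V

theorem evalR_bianchi (X Y U V : Fin n → ℝ) :
    T.evalR X Y U V + T.evalR Y U X V + T.evalR U X Y V = 0 :=
  quadrilinear_bianchi T.bianchi X Y U V

theorem evalC_ofReal (X Y U V : Fin n → ℝ) :
    T.evalC (ofReal ∘ X) (ofReal ∘ Y) (ofReal ∘ U) (ofReal ∘ V) = T.evalR X Y U V :=
  (ofRealHom.map_quadrilinear T.R X Y U V).symm

theorem star_evalC (Z W U V : Fin n → ℂ) :
    star (T.evalC Z W U V) = T.evalC (star Z) (star W) (star U) (star V) := by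
  rw [Complex.star_def, evalC_eq_quadrilinear, (starRingEnd ℂ).map_quadrilinear]
  simp only [conj_ofReal]
  rfl

theorem evalC_pair_comm (Z W U V : Fin n → ℂ) : T.evalC U V Z W = T.evalC Z W U V :=
  quadrilinear_pair_comm (fun i j k l => by rw [T.pair_symm]) Z W U V

theorem evalC_smul_add (a b c d : ℂ) (Z W U V : Fin n → ℂ) :
    T.evalC (a • Z + b • W) (c • Z + d • W) (star a • U + star b • V) (star c • U + star d • V)
      = (a * d - b * c) * star (a * d - b * c) * T.evalC Z W U V := by
  rw [star_sub, star_mul, star_mul, mul_comm (star d), mul_comm (star c)]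
  exact quadrilinear_smul_add (fun i j k l => by rw [T.skew₁]; push_cast; rfl)
    (fun i j k l => by rw [T.skew₂]; push_cast; rfl) _ _ _ _ _ _ _ _ Z W U V

def complexSectional (Z W : Fin n → ℂ) : ℝ := (T.evalC Z W (star Z) (star W)).re

theorem evalC_star_eq_ofReal (Z W : Fin n → ℂ) :
    T.evalC Z W (star Z) (star W) = T.complexSectional Z W := by
  refine (conj_eq_iff_re.mp ?_).symm
  rw [← Complex.star_def, star_evalC, star_star, star_star, evalC_pair_comm]

theorem complexSectional_smul_add (a b c d : ℂ) (Z W : Fin n → ℂ) :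
    T.complexSectional (a • Z + b • W) (c • Z + d • W)
      = normSq (a * d - b * c) * T.complexSectional Z W := by
  rw [complexSectional, star_add, star_add, star_smul, star_smul, star_smul, star_smul,
    evalC_smul_add, Complex.star_def, mul_conj, evalC_star_eq_ofReal, ← ofReal_mul, ofReal_re]

theorem complexSectional_nonneg_of_smul_add {a b c d : ℂ} (hdet : a * d - b * c ≠ 0)
    {Z W : Fin n → ℂ} (h : 0 ≤ T.complexSectional (a • Z + b • W) (c • Z + d • W)) :
    0 ≤ T.complexSectional Z W := by
  rw [complexSectional_smul_add] at h
  exact nonneg_of_mul_nonneg_right h (normSq_pos.mpr hdet)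

theorem complexSectional_zero_left (W : Fin n → ℂ) : T.complexSectional 0 W = 0 := by
  simp [complexSectional, evalC]

theorem complexSectional_zero_right (Z : Fin n → ℂ) : T.complexSectional Z 0 = 0 := by
  simp [complexSectional, evalC]

theorem complexSectional_cx (x y u v : Fin n → ℝ) :
    T.complexSectional (cx x y) (cx u v)
      = T.evalR x u x u + T.evalR x v x v + T.evalR y u y u + T.evalR y v y v
        - 2 * T.evalR x y u v := by
  have hyuxv := T.evalR_pair_comm x v y u
  have hyvxu := T.evalR_pair_comm x u y v
  have huxyv := T.evalR_swap₁₂ x u y v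
  have hbianchi := T.evalR_bianchi x y u v
  rw [complexSectional, star_cx, star_cx, cx_eq_add, cx_eq_add]
  simp only [evalC_eq_quadrilinear, quadrilinear_add₁, quadrilinear_add₂, quadrilinear_add₃,
    quadrilinear_add₄, quadrilinear_smul₁, quadrilinear_smul₂, quadrilinear_smul₃,
    quadrilinear_smul₄]
  simp only [← evalC_eq_quadrilinear, evalC_ofReal]
  simp only [neg_mul, add_re, ofReal_re, mul_re, I_re, zero_mul, I_im, ofReal_im, mul_zero,
    sub_self, add_zero, add_im, mul_im, one_mul, zero_add, zero_sub, neg_re, neg_add_rev, neg_neg,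
    neg_im]
  linarith

theorem complexSectional_nonneg_of_dotProduct_eq_zero
    (H : ∀ x y u v, PairwiseOrthogonal x y u v → 0 ≤ T.complexSectional (cx x y) (cx u v))
    {Z W : Fin n → ℂ} (hq : Z ⬝ᵥ W = 0) (hh : Z ⬝ᵥ star W = 0) :
    0 ≤ T.complexSectional Z W := by
  obtain ⟨μ, hμ, hμZ⟩ := exists_ne_zero_sq_mul_im_eq_zero (Z ⬝ᵥ Z)
  obtain ⟨ν, hν, hνW⟩ := exists_ne_zero_sq_mul_im_eq_zero (W ⬝ᵥ W)
  refine T.complexSectional_nonneg_of_smul_add (a := μ) (b := 0) (c := 0) (d := ν)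
    (by simpa using mul_ne_zero hμ hν) ?_
  rw [zero_smul, zero_smul, add_zero, zero_add, ← cx_re_im (μ • Z), ← cx_re_im (ν • W)]
  refine H _ _ _ _ (pairwiseOrthogonal_re_im ?_ ?_ ?_ ?_)
  · simp [hq]
  · simp [star_smul, hh]
  · simpa [sq, mul_assoc] using hμZ
  · simpa [sq, mul_assoc] using hνW

theorem complexSectional_nonneg_of_dotProduct_star_eq_zero
    (H : ∀ x y u v, PairwiseOrthogonal x y u v → 0 ≤ T.complexSectional (cx x y) (cx u v))
    {Z W : Fin n → ℂ} (hh : Z ⬝ᵥ star W = 0) : 0 ≤ T.complexSectional Z W := by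
  rcases eq_or_ne Z 0 with rfl | hZ
  · rw [complexSectional_zero_left]
  rcases eq_or_ne W 0 with rfl | hW
  · rw [complexSectional_zero_right]
  obtain ⟨p, hp, hpZ⟩ := exists_pos_dotProduct_star_self_eq_ofReal hZ
  obtain ⟨s, hs, hsW⟩ := exists_pos_dotProduct_star_self_eq_ofReal hW
  have hh' : W ⬝ᵥ star Z = 0 := by rw [Matrix.dotProduct_star, hh, star_zero]
  obtain ⟨t, ht⟩ := exists_rotation (s * (Z ⬝ᵥ Z)) (Z ⬝ᵥ W) (p * (W ⬝ᵥ W)) hp.le hs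
  have ht2 := mul_conj t
  rw [← Complex.star_def] at ht2
  have hdet : 1 * (p : ℂ) - t * (-star t * s) ≠ 0 := by
    have : 1 * (p : ℂ) - t * (-star t * s) = ((p + normSq t * s : ℝ) : ℂ) := by
      push_cast
      linear_combination s * ht2
    rw [this]
    exact ofReal_ne_zero.mpr (add_pos_of_pos_of_nonneg hp (mul_nonneg (normSq_nonneg t) hs.le)).ne'
  refine T.complexSectional_nonneg_of_smul_add hdet
    (T.complexSectional_nonneg_of_dotProduct_eq_zero H ?_ ?_)
  · simp only [add_dotProduct, dotProduct_add, smul_dotProduct, dotProduct_smul, smul_eq_mul,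
      dotProduct_comm W Z]
    linear_combination ht - s * (Z ⬝ᵥ W) * ht2
  · simp only [star_add, star_smul, add_dotProduct, dotProduct_add, smul_dotProduct,
      dotProduct_smul, smul_eq_mul, hh, hh', hpZ, hsW, star_neg, star_mul', Complex.star_def,
      conj_ofReal, conj_conj]
    ring

theorem complexSectional_nonneg_of_forall_pairwiseOrthogonal
    (H : ∀ x y u v, PairwiseOrthogonal x y u v → 0 ≤ T.complexSectional (cx x y) (cx u v))
    (Z W : Fin n → ℂ) : 0 ≤ T.complexSectional Z W := by
  rcases eq_or_ne Z 0 with rfl | hZ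
  · rw [complexSectional_zero_left]
  obtain ⟨p, hp, hpZ⟩ := exists_pos_dotProduct_star_self_eq_ofReal hZ
  refine T.complexSectional_nonneg_of_smul_add (a := 1) (b := 0) (c := -(W ⬝ᵥ star Z))
    (d := p) (by simpa using hp.ne') (T.complexSectional_nonneg_of_dotProduct_star_eq_zero H ?_)
  have hc : star (W ⬝ᵥ star Z) = Z ⬝ᵥ star W := (Matrix.dotProduct_star Z W).symm
  simp only [one_smul, zero_smul, add_zero, star_add, star_smul, dotProduct_add,
    dotProduct_smul, smul_eq_mul, hpZ, star_neg, hc, Complex.star_def, conj_ofReal]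
  ring

def QuarterPinched (k : ℝ) : Prop :=
  ∀ X Y : Fin n → ℝ,
    k / 4 * (X ⬝ᵥ X * Y ⬝ᵥ Y - (X ⬝ᵥ Y) ^ 2) ≤ T.evalR X Y X Y ∧
      T.evalR X Y X Y ≤ k * (X ⬝ᵥ X * Y ⬝ᵥ Y - (X ⬝ᵥ Y) ^ 2)

theorem evalR_smul (a b c d : ℝ) (X Y U V : Fin n → ℝ) :
    T.evalR (a • X) (b • Y) (c • U) (d • V) = a * b * c * d * T.evalR X Y U V := by
  simp only [evalR_eq_quadrilinear, quadrilinear_smul₁, quadrilinear_smul₂, quadrilinear_smul₃,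
    quadrilinear_smul₄]
  ring

theorem evalR_polarization (p q w r : Fin n → ℝ) :
    8 * (T.evalR p q w r + T.evalR p r w q)
      = T.evalR (p + w) (q + r) (p + w) (q + r) - T.evalR (p - w) (q + r) (p - w) (q + r)
        - T.evalR (p + w) (q - r) (p + w) (q - r) + T.evalR (p - w) (q - r) (p - w) (q - r) := by
  have hwr := T.evalR_pair_comm p q w r
  have hwq := T.evalR_pair_comm p r w q
  have hw : p - w = p + (-1 : ℝ) • w := by rw [neg_one_smul, sub_eq_add_neg]
  have hr : q - r = q + (-1 : ℝ) • r := by rw [neg_one_smul, sub_eq_add_neg]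
  rw [hw, hr]
  simp only [evalR_eq_quadrilinear, quadrilinear_add₁,
    quadrilinear_add₂, quadrilinear_add₃, quadrilinear_add₄, quadrilinear_smul₁,
    quadrilinear_smul₂, quadrilinear_smul₃, quadrilinear_smul₄] at hwr hwq ⊢
  linarith

section Pinched

variable {T} {k : ℝ}

/- By Bianchi, the two polarizations combine to `24 R(x,y,u,v)`, a difference of two sums of
four sectional curvatures of planes with `|p|²|q|² - ⟨p,q⟩² = 4`. -/
theorem two_mul_evalR_le_of_orthonormal (hT : T.QuarterPinched k) {x y u v : Fin n → ℝ}
    (ho : PairwiseOrthogonal x y u v) (hx : x ⬝ᵥ x = 1) (hy : y ⬝ᵥ y = 1) (hu : u ⬝ᵥ u = 1)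
    (hv : v ⬝ᵥ v = 1) : 2 * T.evalR x y u v ≤ k := by
  obtain ⟨hxy, hxu, hxv, hyu, hyv, huv⟩ := ho
  have hux : u ⬝ᵥ x = 0 := by rw [dotProduct_comm, hxu]
  have hvx : v ⬝ᵥ x = 0 := by rw [dotProduct_comm, hxv]
  have huy : u ⬝ᵥ y = 0 := by rw [dotProduct_comm, hyu]
  have hvy : v ⬝ᵥ y = 0 := by rw [dotProduct_comm, hyv]
  have hvu : v ⬝ᵥ u = 0 := by rw [dotProduct_comm, huv]
  have hG1 := T.evalR_polarization x y u v
  have hG2 := T.evalR_polarization x y v u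
  have u1 := (hT (x + u) (y + v)).2
  have u2 := (hT (x - u) (y - v)).2
  have u3 := (hT (x + v) (y - u)).2
  have u4 := (hT (x - v) (y + u)).2
  have d1 := (hT (x + u) (y - v)).1
  have d2 := (hT (x - u) (y + v)).1
  have d3 := (hT (x + v) (y + u)).1
  have d4 := (hT (x - v) (y - u)).1
  simp only [add_dotProduct, dotProduct_add, sub_dotProduct, dotProduct_sub,
    hx, hy, hu, hv, hxy, huv, hxu, hxv, hyu, hyv, hvu, hux, hvx, huy, hvy] at u1 u2 u3 u4 d1 d2 d3 d4
  have hbianchi := T.evalR_bianchi x v u y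
  have h1 := T.evalR_pair_comm x y v u
  have h2 := T.evalR_swap₃₄ x y u v
  have h3 := T.evalR_swap₁₂ x u v y
  linarith

theorem two_mul_evalR_le_of_pairwiseOrthogonal (hT : T.QuarterPinched k)
    {x y u v : Fin n → ℝ} (ho : PairwiseOrthogonal x y u v) :
    2 * T.evalR x y u v
      ≤ k * (√(x ⬝ᵥ x) * √(y ⬝ᵥ y) * √(u ⬝ᵥ u) * √(v ⬝ᵥ v)) := by
  by_cases hzero : x = 0 ∨ y = 0 ∨ u = 0 ∨ v = 0
  · rcases hzero with rfl | rfl | rfl | rfl <;> simp [evalR]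
  simp only [not_or] at hzero
  obtain ⟨hx, hy, hu, hv⟩ := hzero
  have hnorm : ∀ z : Fin n → ℝ, z ≠ 0 →
      0 < √(z ⬝ᵥ z) ∧ (√(z ⬝ᵥ z))⁻¹ • z ⬝ᵥ (√(z ⬝ᵥ z))⁻¹ • z = 1 := by
    intro z hz
    have hpos : 0 < z ⬝ᵥ z := lt_of_le_of_ne (Finset.sum_nonneg fun i _ => mul_self_nonneg (z i))
      (Ne.symm (dotProduct_self_eq_zero.not.mpr hz))
    refine ⟨Real.sqrt_pos.mpr hpos, ?_⟩
    rw [smul_dotProduct, dotProduct_smul, smul_eq_mul, smul_eq_mul, ← mul_assoc, ← mul_inv,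
      Real.mul_self_sqrt hpos.le, inv_mul_cancel₀ hpos.ne']
  obtain ⟨ha, hx1⟩ := hnorm x hx
  obtain ⟨hb, hy1⟩ := hnorm y hy
  obtain ⟨hc, hu1⟩ := hnorm u hu
  obtain ⟨hd, hv1⟩ := hnorm v hv
  have h := two_mul_evalR_le_of_orthonormal hT (ho.smul _ _ _ _) hx1 hy1 hu1 hv1
  rw [evalR_smul, ← mul_inv, ← mul_inv, ← mul_inv] at h
  have habcd := mul_pos (mul_pos (mul_pos ha hb) hc) hd
  rw [mul_left_comm, inv_mul_le_iff₀ habcd] at h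
  linarith

theorem complexSectional_cx_nonneg (hT : T.QuarterPinched k) (hk : 0 ≤ k)
    {x y u v : Fin n → ℝ} (ho : PairwiseOrthogonal x y u v) :
    0 ≤ T.complexSectional (cx x y) (cx u v) := by
  have hberger := two_mul_evalR_le_of_pairwiseOrthogonal hT ho
  obtain ⟨-, hxu, hxv, hyu, hyv, -⟩ := ho
  have hsq : ∀ z : Fin n → ℝ, z ⬝ᵥ z = √(z ⬝ᵥ z) ^ 2 := fun z =>
    (Real.sq_sqrt (Finset.sum_nonneg fun i _ => mul_self_nonneg (z i))).symm
  have lxu := (hT x u).1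
  have lxv := (hT x v).1
  have lyu := (hT y u).1
  have lyv := (hT y v).1
  rw [hxu, hsq x, hsq u] at lxu
  rw [hxv, hsq x, hsq v] at lxv
  rw [hyu, hsq y, hsq u] at lyu
  rw [hyv, hsq y, hsq v] at lyv
  rw [complexSectional_cx]
  nlinarith [mul_nonneg hk (sq_nonneg (√(x ⬝ᵥ x) * √(u ⬝ᵥ u) - √(y ⬝ᵥ y) * √(v ⬝ᵥ v))),
    mul_nonneg hk (sq_nonneg (√(x ⬝ᵥ x) * √(v ⬝ᵥ v) - √(y ⬝ᵥ y) * √(u ⬝ᵥ u)))]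

end Pinched

end AlgCurv

theorem quarter_pinched_nonnegCSC_general {n : ℕ} (T : AlgCurv n) (k : ℝ) (hk : 0 < k)
    (hpinch : ∀ X Y : Fin n → ℝ,
      k / 4 * (rInner X X * rInner Y Y - rInner X Y ^ 2) ≤ T.evalR X Y X Y ∧
      T.evalR X Y X Y ≤ k * (rInner X X * rInner Y Y - rInner X Y ^ 2)) :
    nonnegCSC T := fun Z W =>
  ⟨T.complexSectional Z W,
    T.complexSectional_nonneg_of_forall_pairwiseOrthogonal
      (fun _ _ _ _ ho => T.complexSectional_cx_nonneg hpinch hk.le ho) Z W,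
    T.evalC_star_eq_ofReal Z W⟩

/-- pointwise 1/4-pinching implies nonnegative complex sectional curvature. -/
theorem quarter_pinched_nonnegCSC {n : ℕ} (hn : 2 ≤ n) (T : AlgCurv n) (k : ℝ) (hk : 0 < k)
    (hpinch : ∀ X Y : Fin n → ℝ,
      k / 4 * (rInner X X * rInner Y Y - rInner X Y ^ 2) ≤ T.evalR X Y X Y ∧
      T.evalR X Y X Y ≤ k * (rInner X X * rInner Y Y - rInner X Y ^ 2)) :
    nonnegCSC T :=
  quarter_pinched_nonnegCSC_general T k hk hpinch
end
end

section
/- Let R be an algebraic curvature tensor on ℝⁿ, let f ≥ 0 be a real number, and assume Ric(R)(X,X) ≥ (n−1)·f·|X|² for all X ∈ ℝⁿ. Then for all Z, W ∈ ℂⁿ, 2f·(Ric(R)∧id)(Z,W,Z̄,W̄) − (n−1)·f²·I(Z,W,Z̄,W̄) ≥ 0, where both terms are real numbers. -/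
/-! Put `c = (n - 1) f`. The Ricci bound says that `B = Ric(R) - c·id` is positive semidefinite,
hence a Gram matrix `SᵀS`. As `A ↦ A ∧ id` is linear with `id ∧ id = I`, we get
`Ric(R) ∧ id = B ∧ id + c I`, and a Lagrange-type identity gives
`(SᵀS ∧ id)(Z,W,Z̄,W̄) = ½ Σₘ |(SZ)ₘ W - (SW)ₘ Z|²` and
`I(Z,W,Z̄,W̄) = ½ Σₘ |Zₘ W - Wₘ Z|²`.
So both terms are nonnegative reals, and
`2f (Ric(R) ∧ id) - (n - 1) f² I = 2f (B ∧ id) + f² (n - 1) I ≥ 0`. -/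

open Complex

noncomputable section

open scoped Matrix

section

variable {n : ℕ}

/-- `‖α ⊗ W - β ⊗ Z‖²` in `ℂⁿ ⊗ ℂⁿ`. -/
def normSqTmulSub (α β Z W : Fin n → ℂ) : ℝ :=
  ∑ m, ∑ k, Complex.normSq (α m * W k - β m * Z k)

theorem normSqTmulSub_nonneg (α β Z W : Fin n → ℂ) : 0 ≤ normSqTmulSub α β Z W :=
  Finset.sum_nonneg fun _ _ => Finset.sum_nonneg fun _ _ => Complex.normSq_nonneg _

theorem lagrange_identity_cInner (α β Z W : Fin n → ℂ) :
    cInner α (conjV α) * cInner W (conjV W) + cInner β (conjV β) * cInner Z (conjV Z)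
      - cInner β (conjV α) * cInner Z (conjV W) - cInner α (conjV β) * cInner W (conjV Z)
      = normSqTmulSub α β Z W := by
  simp only [normSqTmulSub, cInner, conjV, Finset.sum_mul_sum, ← Finset.sum_sub_distrib,
    ← Finset.sum_add_distrib]
  push_cast
  refine Finset.sum_congr rfl fun m _ => Finset.sum_congr rfl fun k _ => ?_
  rw [← Complex.mul_conj]
  simp only [map_sub, map_mul]
  ring

theorem cInner_mulVecC_transpose_mul (S : Matrix (Fin n) (Fin n) ℝ) (Z W : Fin n → ℂ) :
    cInner (mulVecC (Sᵀ * S) Z) (conjV W) = cInner (mulVecC S Z) (conjV (mulVecC S W)) := by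
  simp only [cInner, mulVecC, conjV, Matrix.mul_apply, Matrix.transpose_apply, map_sum, map_mul,
    Complex.conj_ofReal, Finset.sum_mul, Finset.mul_sum, Complex.ofReal_sum, Complex.ofReal_mul]
  conv_rhs => rw [Finset.sum_comm]
  refine Finset.sum_congr rfl fun i _ => ?_
  rw [Finset.sum_comm]
  exact Finset.sum_congr rfl fun m _ => Finset.sum_congr rfl fun x _ => by ring

theorem wedgeId_transpose_mul_self (S : Matrix (Fin n) (Fin n) ℝ) (Z W : Fin n → ℂ) :
    wedgeId (Sᵀ * S) Z W = ((normSqTmulSub (mulVecC S Z) (mulVecC S W) Z W / 2 : ℝ) : ℂ) := by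
  simp only [wedgeId, cInner_mulVecC_transpose_mul]
  push_cast
  rw [← lagrange_identity_cInner]
  ring

theorem IC_conjV_eq_normSqTmulSub (Z W : Fin n → ℂ) :
    IC Z W (conjV Z) (conjV W) = ((normSqTmulSub Z W Z W / 2 : ℝ) : ℂ) := by
  push_cast
  rw [IC, ← lagrange_identity_cInner]
  ring

theorem cInner_mulVecC_add_smul_one (A : Matrix (Fin n) (Fin n) ℝ) (c : ℝ)
    (Z V : Fin n → ℂ) :
    cInner (mulVecC (A + c • 1) Z) V = cInner (mulVecC A Z) V + c * cInner Z V := by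
  simp [cInner, mulVecC, Matrix.add_apply, Matrix.one_apply, add_mul, Finset.sum_add_distrib,
    Finset.mul_sum, apply_ite Complex.ofReal, ite_mul, mul_assoc]

theorem wedgeId_add_smul_one (A : Matrix (Fin n) (Fin n) ℝ) (c : ℝ) (Z W : Fin n → ℂ) :
    wedgeId (A + c • 1) Z W = wedgeId A Z W + c * IC Z W (conjV Z) (conjV W) := by
  simp only [wedgeId, IC, cInner_mulVecC_add_smul_one]
  ring

theorem isSymm_ricM (T : AlgCurv n) : (ricM T).IsSymm :=
  Matrix.IsSymm.ext fun i j => by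
    simpa only [ricM, Matrix.of_apply] using Finset.sum_congr rfl fun p _ => T.pair_symm j p i p

theorem posSemidef_sub_smul_one_of_forall_le {A : Matrix (Fin n) (Fin n) ℝ} (hA : A.IsSymm)
    {c : ℝ} (h : ∀ X, c * rInner X X ≤ rInner (A *ᵥ X) X) : (A - c • 1).PosSemidef := by
  refine .of_dotProduct_mulVec_nonneg ?_ fun X => ?_
  · exact Matrix.isHermitian_iff_isSymm.mpr (hA.sub (Matrix.isSymm_one.smul c))
  · simp only [star_trivial, Matrix.sub_mulVec, Matrix.smul_mulVec, Matrix.one_mulVec,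
      dotProduct_sub, dotProduct_smul, smul_eq_mul]
    rw [dotProduct_comm X]
    exact sub_nonneg.mpr (h X)

open scoped MatrixOrder in
theorem Matrix.PosSemidef.exists_eq_transpose_mul_self {ι : Type*} [Fintype ι] [DecidableEq ι]
    {B : Matrix ι ι ℝ} (hB : B.PosSemidef) : ∃ S : Matrix ι ι ℝ, B = Sᵀ * S :=
  CStarAlgebra.nonneg_iff_eq_star_mul_self.mp hB.nonneg

end

/-- if `Ric(R) ≥ (n−1) f` then
`2f (Ric(R) ∧ id) − (n−1) f² I ≥ 0` on `(Z, W, Z̄, W̄)`, both terms being real. -/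
theorem ric_wedge_inequality {n : ℕ} (T : AlgCurv n) (f : ℝ) (hf : 0 ≤ f)
    (hric : ∀ X : Fin n → ℝ,
      ((n : ℝ) - 1) * f * rInner X X ≤ rInner ((ricM T).mulVec X) X)
    (Z W : Fin n → ℂ) :
    ∃ a b : ℝ, wedgeId (ricM T) Z W = (a : ℂ)
      ∧ IC Z W (conjV Z) (conjV W) = (b : ℂ)
      ∧ 0 ≤ 2 * f * a - ((n : ℝ) - 1) * f ^ 2 * b := by
  set c := ((n : ℝ) - 1) * f
  obtain ⟨S, hS⟩ :=
    (posSemidef_sub_smul_one_of_forall_le (isSymm_ricM T) hric).exists_eq_transpose_mul_self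
  have hRic : ricM T = Sᵀ * S + c • 1 := by rw [← hS, sub_add_cancel]
  set a := normSqTmulSub (mulVecC S Z) (mulVecC S W) Z W / 2
  set b := normSqTmulSub Z W Z W / 2
  refine ⟨a + c * b, b, ?_, IC_conjV_eq_normSqTmulSub Z W, ?_⟩
  · rw [hRic, wedgeId_add_smul_one, wedgeId_transpose_mul_self, IC_conjV_eq_normSqTmulSub]
    simp only [a, b]
    push_cast
    ring
  · have ha : 0 ≤ a := by
      have := normSqTmulSub_nonneg (mulVecC S Z) (mulVecC S W) Z W
      positivity
    have hb : 0 ≤ ((n : ℝ) - 1) * b := by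
      rcases n with _ | n
      · simp [b, normSqTmulSub]
      · have := normSqTmulSub_nonneg Z W Z W
        simpa using mul_nonneg n.cast_nonneg (by positivity : 0 ≤ b)
    calc (0 : ℝ) ≤ 2 * f * a + f ^ 2 * (((n : ℝ) - 1) * b) := by positivity
      _ = _ := by ring
end
end

section
/- For any Z, W ∈ ℂⁿ there exist complex numbers u, v, x, y such that the extended vectors Z̃ = (Z, u, v) and W̃ = (W, x, y) in ℂ^{n+2} satisfy ⟨Z̃, Z̃⟩ = 0, ⟨W̃, W̃⟩ = 0, and ⟨Z̃, W̃⟩ = 0; equivalently, u² + v² = −⟨Z,Z⟩, x² + y² = −⟨W,W⟩, and ux + vy = −⟨Z,W⟩. In particular, any two linearly independent vectors of ℂⁿ extend to vectors spanning a totally isotropic 2-plane in ℂ^{n+2}. -/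
open Complex

noncomputable section

/-- For `a ≠ 0` take `p = 1`, `q = a` and `r` a root of `a r² - c r + b`. -/
theorem exists_hyperbolic_realization {K : Type*} [Field K] [IsSepClosed K] [NeZero (2 : K)]
    (a b c : K) : ∃ p q r s : K, p * q = a ∧ r * s = b ∧ p * s + q * r = c := by
  rcases eq_or_ne a 0 with rfl | ha
  · exact ⟨c, 0, b, 1, by ring, by ring, by ring⟩
  obtain ⟨d, hd⟩ := IsSepClosed.exists_eq_mul_self (discrim a (-c) b)
  obtain ⟨r, hr⟩ := exists_quadratic_eq_zero ha ⟨d, hd⟩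
  exact ⟨1, a, r, c - a * r, by ring, by linear_combination -hr, by ring⟩

/-- The substitution `u = (p + q)/2`, `v = i(q - p)/2` turns `pq` into `u² + v²`. -/
theorem exists_sum_sq_realization {K : Type*} [Field K] [IsSepClosed K] [NeZero (2 : K)]
    (a b c : K) : ∃ u v x y : K,
      u * u + v * v = a ∧ x * x + y * y = b ∧ u * x + v * y = c := by
  obtain ⟨i, hi⟩ := IsSepClosed.exists_eq_mul_self (-1 : K)
  obtain ⟨p, q, r, s, hpq, hrs, hc⟩ := exists_hyperbolic_realization a b (2 * c)
  refine ⟨(p + q) / 2, i * (q - p) / 2, (r + s) / 2, i * (s - r) / 2, ?_, ?_, ?_⟩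
  · field_simp
    linear_combination 4 * hpq - (q - p) ^ 2 * hi
  · field_simp
    linear_combination 4 * hrs - (s - r) ^ 2 * hi
  · field_simp
    linear_combination 2 * hc - (q - p) * (s - r) * hi

theorem cInner_append {m n : ℕ} (Z W : Fin m → ℂ) (Z' W' : Fin n → ℂ) :
    cInner (Fin.append Z Z') (Fin.append W W') = cInner Z W + cInner Z' W' := by
  simp [cInner, Fin.sum_univ_add]

theorem cInner_fin_two (u v x y : ℂ) : cInner ![u, v] ![x, y] = u * x + v * y := by
  simp [cInner]

/-- any `Z, W ∈ ℂⁿ` extend to vectors `Z̃ = (Z, u, v)`,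
`W̃ = (W, x, y)` in `ℂ^{n+2}` spanning a totally isotropic plane. -/
theorem exists_isotropic_extension {n : ℕ} (Z W : Fin n → ℂ) :
    ∃ u v x y : ℂ,
      cInner (Fin.append Z ![u, v]) (Fin.append Z ![u, v]) = 0 ∧
      cInner (Fin.append W ![x, y]) (Fin.append W ![x, y]) = 0 ∧
      cInner (Fin.append Z ![u, v]) (Fin.append W ![x, y]) = 0 := by
  obtain ⟨u, v, x, y, hZ, hW, hZW⟩ :=
    exists_sum_sq_realization (-cInner Z Z) (-cInner W W) (-cInner Z W)
  refine ⟨u, v, x, y, ?_, ?_, ?_⟩ <;> simp only [cInner_append, cInner_fin_two]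
  · linear_combination hZ
  · linear_combination hW
  · linear_combination hZW
end
end

section
/- Let R be an algebraic curvature tensor on ℝⁿ and let R̃ be the algebraic curvature tensor on ℝ^{n+1} defined by R̃(x,y,z,w) = R(π(x),π(y),π(z),π(w)), where π : ℝ^{n+1} → ℝⁿ is the projection onto the first n coordinates. Then the following are equivalent: (1) R̃ has nonnegative isotropic curvature, i.e. R̃(Ẑ, Ŵ, conj(Ẑ), conj(Ŵ)) ≥ 0 for all Ẑ, Ŵ ∈ ℂ^{n+1} with ⟨Ẑ,Ẑ⟩ = ⟨Ŵ,Ŵ⟩ = ⟨Ẑ,Ŵ⟩ = 0; (2) R is nonnegative on isotropic 2-vectors, i.e. R(Z, W, Z̄, W̄) ≥ 0 for all Z, W ∈ ℂⁿ with ⟨Z,Z⟩·⟨W,W⟩ − ⟨Z,W⟩² = 0. -/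
open Complex

noncomputable section

/-- The complexified projection `ℂ^{n+1} → ℂⁿ` onto the first `n` coordinates. -/
def projC1 {n : ℕ} (Z : Fin (n + 1) → ℂ) : Fin n → ℂ := fun i => Z (Fin.castSucc i)

/-!
Write `Ẑ = (Z, z)` and `Ŵ = (W, w)` with `z, w ∈ ℂ` the last coordinates. Then
`⟨Ẑ, Ŵ⟩ = ⟨Z, W⟩ + z w`, so `(Ẑ, Ŵ)` spans a totally isotropic plane exactly when
`⟨Z, Z⟩ = -z²`, `⟨W, W⟩ = -w²` and `⟨Z, W⟩ = -z w`. Such `z, w` exist precisely when the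
Gram determinant `⟨Z, Z⟩⟨W, W⟩ - ⟨Z, W⟩²` vanishes, since `ℂ` has square roots. As `R̃`
only sees the first `n` coordinates, the two curvature conditions are the same.
-/

lemma exists_sq_eq_sq_eq_mul_eq_of_mul_eq_sq {K : Type*} [Field K] [IsAlgClosed K]
    {x y z : K} (h : x * y = z ^ 2) : ∃ a b : K, a ^ 2 = x ∧ b ^ 2 = y ∧ a * b = z := by
  obtain ⟨a, ha⟩ := IsAlgClosed.exists_pow_nat_eq x two_pos
  obtain ⟨b, hb⟩ := IsAlgClosed.exists_pow_nat_eq y two_pos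
  have hab : (a * b) ^ 2 = z ^ 2 := by rw [mul_pow, ha, hb, h]
  rcases sq_eq_sq_iff_eq_or_eq_neg.mp hab with hz | hz
  · exact ⟨a, b, ha, hb, hz⟩
  · exact ⟨a, -b, ha, by rw [neg_sq, hb], by rw [mul_neg, hz, neg_neg]⟩

section

variable {n : ℕ}

lemma cInner_snoc (Z W : Fin n → ℂ) (a b : ℂ) :
    cInner (Fin.snoc Z a : Fin (n + 1) → ℂ) (Fin.snoc W b) = cInner Z W + a * b := by
  simp [cInner, Fin.sum_univ_castSucc]

lemma cInner_projC1 (Zh Wh : Fin (n + 1) → ℂ) :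
    cInner (projC1 Zh) (projC1 Wh) = cInner Zh Wh - Zh (Fin.last n) * Wh (Fin.last n) := by
  simp [cInner, projC1, Fin.sum_univ_castSucc]

lemma projC1_snoc (Z : Fin n → ℂ) (a : ℂ) : projC1 (Fin.snoc Z a) = Z := by
  funext i; simp [projC1]

lemma projC1_conjV (Zh : Fin (n + 1) → ℂ) : projC1 (conjV Zh) = conjV (projC1 Zh) :=
  rfl

lemma gram_projC1_eq_zero {Zh Wh : Fin (n + 1) → ℂ}
    (hZ : cInner Zh Zh = 0) (hW : cInner Wh Wh = 0) (hZW : cInner Zh Wh = 0) :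
    cInner (projC1 Zh) (projC1 Zh) * cInner (projC1 Wh) (projC1 Wh)
      - cInner (projC1 Zh) (projC1 Wh) ^ 2 = 0 := by
  rw [cInner_projC1, cInner_projC1, cInner_projC1, hZ, hW, hZW]
  ring

lemma exists_isotropic_lift {Z W : Fin n → ℂ}
    (h : cInner Z Z * cInner W W - cInner Z W ^ 2 = 0) :
    ∃ Zh Wh : Fin (n + 1) → ℂ, cInner Zh Zh = 0 ∧ cInner Wh Wh = 0 ∧ cInner Zh Wh = 0 ∧
      projC1 Zh = Z ∧ projC1 Wh = W := by
  obtain ⟨a, b, ha, hb, hab⟩ := exists_sq_eq_sq_eq_mul_eq_of_mul_eq_sq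
    (x := -cInner Z Z) (y := -cInner W W) (z := -cInner Z W) (by linear_combination h)
  refine ⟨Fin.snoc Z a, Fin.snoc W b, ?_, ?_, ?_, projC1_snoc Z a, projC1_snoc W b⟩ <;>
    rw [cInner_snoc]
  · linear_combination ha
  · linear_combination hb
  · linear_combination hab

end

/-- `R̃` (the pullback of `R` to `ℝ^{n+1}`) has nonnegative isotropic
curvature iff `R` is nonnegative on isotropic 2-vectors. -/
theorem tildeC_iff_nonneg_isotropic_two_vectors {n : ℕ} (T : AlgCurv n) :
    (∀ Zh Wh : Fin (n + 1) → ℂ,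
        cInner Zh Zh = 0 → cInner Wh Wh = 0 → cInner Zh Wh = 0 →
        ∃ r : ℝ, 0 ≤ r ∧
          T.evalC (projC1 Zh) (projC1 Wh) (projC1 (conjV Zh)) (projC1 (conjV Wh)) = (r : ℂ))
    ↔ (∀ Z W : Fin n → ℂ, cInner Z Z * cInner W W - (cInner Z W) ^ 2 = 0 →
        ∃ r : ℝ, 0 ≤ r ∧ T.evalC Z W (conjV Z) (conjV W) = (r : ℂ)) := by
  constructor
  · intro h Z W hiso
    obtain ⟨Zh, Wh, hZ, hW, hZW, rfl, rfl⟩ := exists_isotropic_lift hiso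
    simpa only [projC1_conjV] using h Zh Wh hZ hW hZW
  · intro h Zh Wh hZ hW hZW
    simpa only [projC1_conjV] using h _ _ (gram_projC1_eq_zero hZ hW hZW)
end
end
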